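/- Let p be an external point and let T1 and T2 be the two tangent lines to O through p. Let M' be any finite set of internal points with |M'| even such that for every external point q ≠ p on T1 the number of points p' ∈ M' for which the line through q and p' is passant is odd, and the number of points p' ∈ M' for which the line through p and p' is passant is even. Then, with characteristic vectors taken over F_2, χ_{E_{T1}} + χ_{E_{T2}} = Σ_{p' ∈ M'} χ_{N_{Se,E}(p')}. -/

import Mathlib

/- Setting: `K` is a finite field of odd order `q`.  Points and lines of
`PG(2,q)` are both represented as points of the projectivization of `K^3`
(homogeneous coordinates), with incidence given by vanishing of the dot
product.  `O` is the conic `X1^2 - X0*X2 = 0`. -/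

open scoped Classical

noncomputable section

namespace ConicCode

variable (K : Type*) [Field K] [Fintype K]

abbrev Pt := Projectivization K (Fin 3 → K)

instance : Finite (Pt K) := Quotient.finite _

noncomputable instance : Fintype (Pt K) := Fintype.ofFinite _

variable {K}

/-- Dot product of two coordinate triples. -/
def dotV (v w : Fin 3 → K) : K := v 0 * w 0 + v 1 * w 1 + v 2 * w 2

/-- Incidence between a point and a line (both given by projective triples). -/
def Incid (p ℓ : Pt K) : Prop := dotV p.rep ℓ.rep = 0

/-- Membership in the conic `O` defined by `X1^2 - X0*X2`. -/
def OnConic (p : Pt K) : Prop := p.rep 1 ^ 2 - p.rep 0 * p.rep 2 = 0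

/-- A tangent line meets `O` in exactly one point. -/
def Tangent (ℓ : Pt K) : Prop := {p : Pt K | OnConic p ∧ Incid p ℓ}.ncard = 1

/-- A secant line meets `O` in exactly two points. -/
def Secant (ℓ : Pt K) : Prop := {p : Pt K | OnConic p ∧ Incid p ℓ}.ncard = 2

/-- A passant line misses `O`. -/
def Passant (ℓ : Pt K) : Prop := {p : Pt K | OnConic p ∧ Incid p ℓ}.ncard = 0

/-- An external point lies on exactly two tangent lines. -/
def External (p : Pt K) : Prop := {ℓ : Pt K | Tangent ℓ ∧ Incid p ℓ}.ncard = 2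

/-- An internal point lies on no tangent line. -/
def Internal (p : Pt K) : Prop := {ℓ : Pt K | Tangent ℓ ∧ Incid p ℓ}.ncard = 0


/-- Coordinates of the polar line of the point `(a0,a1,a2)`: `[-a2/2, a1, -a0/2]`. -/
def perpVec (v : Fin 3 → K) : Fin 3 → K := ![-(v 2) / 2, v 1, -(v 0) / 2]

/-- The polarity `⊥` induced by the conic `O`.  (In odd characteristic
`perpVec` of a nonzero vector is nonzero, so the `else` branch is never
taken.) -/
def perp (p : Pt K) : Pt K :=
  if h : perpVec p.rep ≠ 0 then Projectivization.mk K _ h else p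

/-- Cross product: coordinates of the line through two distinct points. -/
def crossVec (v w : Fin 3 → K) : Fin 3 → K :=
  ![v 1 * w 2 - v 2 * w 1, v 2 * w 0 - v 0 * w 2, v 0 * w 1 - v 1 * w 0]

/-- The line through two distinct points (junk value if the points coincide). -/
def lineThrough (p q : Pt K) : Pt K :=
  if h : crossVec p.rep q.rep ≠ 0 then Projectivization.mk K _ h else p

/-- The intersection point of two distinct lines (junk value if they coincide). -/
def meetPt (l m : Pt K) : Pt K := lineThrough l m

set_option linter.unusedSectionVars false
open Projectivization

/-! ### Auxiliary quadratic-form algebra on coordinate triples -/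

/-- The quadratic form of the conic. -/
def qf (v : Fin 3 → K) : K := v 1 ^ 2 - v 0 * v 2

/-- The associated bilinear form (twice the polarization). -/
def bf (u v : Fin 3 → K) : K := 2 * (u 1 * v 1) - u 0 * v 2 - u 2 * v 0

/-- Discriminant of the restriction of the conic to a line. -/
def dsc (w : Fin 3 → K) : K := w 1 ^ 2 - 4 * (w 0 * w 2)

/-- Coordinate vector of the polar line of a point (scaled by `-2`). -/
def mvec (c : Fin 3 → K) : Fin 3 → K := ![-(c 2), 2 * c 1, -(c 0)]

lemma vec_ext {v w : Fin 3 → K} (h0 : v 0 = w 0) (h1 : v 1 = w 1) (h2 : v 2 = w 2) :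
    v = w := by
  funext i
  fin_cases i
  exacts [h0, h1, h2]

lemma vec_eq_zero_iff (v : Fin 3 → K) : v = 0 ↔ v 0 = 0 ∧ v 1 = 0 ∧ v 2 = 0 := by
  constructor
  · rintro rfl; exact ⟨rfl, rfl, rfl⟩
  · rintro ⟨h0, h1, h2⟩
    exact vec_ext h0 h1 h2

lemma qf_smul (s : K) (v : Fin 3 → K) : qf (s • v) = s ^ 2 * qf v := by
  show (s * v 1) ^ 2 - (s * v 0) * (s * v 2) = s ^ 2 * (v 1 ^ 2 - v 0 * v 2); ring

lemma bf_smul_left (s : K) (u v : Fin 3 → K) : bf (s • u) v = s * bf u v := by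
  show 2 * (s * u 1 * v 1) - (s * u 0) * v 2 - (s * u 2) * v 0
      = s * (2 * (u 1 * v 1) - u 0 * v 2 - u 2 * v 0); ring

lemma bf_smul_right (s : K) (u v : Fin 3 → K) : bf u (s • v) = s * bf u v := by
  show 2 * (u 1 * (s * v 1)) - u 0 * (s * v 2) - u 2 * (s * v 0)
      = s * (2 * (u 1 * v 1) - u 0 * v 2 - u 2 * v 0); ring

lemma bf_comm (u v : Fin 3 → K) : bf u v = bf v u := by
  show 2 * (u 1 * v 1) - u 0 * v 2 - u 2 * v 0 = 2 * (v 1 * u 1) - v 0 * u 2 - v 2 * u 0; ring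

lemma dsc_smul (s : K) (w : Fin 3 → K) : dsc (s • w) = s ^ 2 * dsc w := by
  show (s * w 1) ^ 2 - 4 * ((s * w 0) * (s * w 2)) = s ^ 2 * (w 1 ^ 2 - 4 * (w 0 * w 2)); ring

lemma dotV_smul_left (s : K) (v w : Fin 3 → K) : dotV (s • v) w = s * dotV v w := by
  show (s * v 0) * w 0 + (s * v 1) * w 1 + (s * v 2) * w 2
      = s * (v 0 * w 0 + v 1 * w 1 + v 2 * w 2); ring

lemma dotV_smul_right (s : K) (v w : Fin 3 → K) : dotV v (s • w) = s * dotV v w := by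
  show v 0 * (s * w 0) + v 1 * (s * w 1) + v 2 * (s * w 2)
      = s * (v 0 * w 0 + v 1 * w 1 + v 2 * w 2); ring

lemma dotV_comm (v w : Fin 3 → K) : dotV v w = dotV w v := by
  show v 0 * w 0 + v 1 * w 1 + v 2 * w 2 = w 0 * v 0 + w 1 * v 1 + w 2 * v 2; ring

lemma dotV_mvec (a c : Fin 3 → K) : dotV a (mvec c) = bf a c := by
  show a 0 * (-(c 2)) + a 1 * (2 * c 1) + a 2 * (-(c 0))
      = 2 * (a 1 * c 1) - a 0 * c 2 - a 2 * c 0; ring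

lemma dsc_mvec (c : Fin 3 → K) : dsc (mvec c) = 4 * qf c := by
  show (2 * c 1) ^ 2 - 4 * ((-(c 2)) * (-(c 0))) = 4 * (c 1 ^ 2 - c 0 * c 2); ring

lemma mvec_smul (s : K) (c : Fin 3 → K) : mvec (s • c) = s • mvec c := by
  refine vec_ext ?_ ?_ ?_
  · show -(s * c 2) = s * (-(c 2)); ring
  · show 2 * (s * c 1) = s * (2 * c 1); ring
  · show -(s * c 0) = s * (-(c 0)); ring

lemma mvec_ne_zero (h2 : (2 : K) ≠ 0) {c : Fin 3 → K} (hc : c ≠ 0) : mvec c ≠ 0 := by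
  intro h
  rw [vec_eq_zero_iff] at h
  obtain ⟨h0, h1, h3⟩ := h
  have h0' : -(c 2) = 0 := h0
  have h1' : 2 * c 1 = 0 := h1
  have h3' : -(c 0) = 0 := h3
  apply hc
  rw [vec_eq_zero_iff]
  refine ⟨neg_eq_zero.mp h3', ?_, neg_eq_zero.mp h0'⟩
  rcases mul_eq_zero.mp h1' with h | h
  · exact absurd h h2
  · exact h

lemma mvec_eq_smul (h2 : (2 : K) ≠ 0) {c d : Fin 3 → K} {s : K}
    (h : mvec d = s • mvec c) : d = s • c := by
  have h0 : -(d 2) = s * (-(c 2)) := congrFun h 0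
  have h1 : 2 * d 1 = s * (2 * c 1) := congrFun h 1
  have h3 : -(d 0) = s * (-(c 0)) := congrFun h 2
  refine vec_ext ?_ ?_ ?_
  · show d 0 = s * c 0; linear_combination -h3
  · show d 1 = s * c 1
    have : (2:K) * d 1 = 2 * (s * c 1) := by linear_combination h1
    exact mul_left_cancel₀ h2 this
  · show d 2 = s * c 2; linear_combination -h0

lemma dot_cross_left (v u : Fin 3 → K) : dotV v (crossVec v u) = 0 := by
  show v 0 * (v 1 * u 2 - v 2 * u 1) + v 1 * (v 2 * u 0 - v 0 * u 2)
      + v 2 * (v 0 * u 1 - v 1 * u 0) = 0; ring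

lemma dot_cross_right (v u : Fin 3 → K) : dotV u (crossVec v u) = 0 := by
  show u 0 * (v 1 * u 2 - v 2 * u 1) + u 1 * (v 2 * u 0 - v 0 * u 2)
      + u 2 * (v 0 * u 1 - v 1 * u 0) = 0; ring

lemma cross_smul_left (s : K) (v u : Fin 3 → K) :
    crossVec (s • v) u = s • crossVec v u := by
  refine vec_ext ?_ ?_ ?_
  · show (s * v 1) * u 2 - (s * v 2) * u 1 = s * (v 1 * u 2 - v 2 * u 1); ring
  · show (s * v 2) * u 0 - (s * v 0) * u 2 = s * (v 2 * u 0 - v 0 * u 2); ring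
  · show (s * v 0) * u 1 - (s * v 1) * u 0 = s * (v 0 * u 1 - v 1 * u 0); ring

lemma dsc_cross (v u : Fin 3 → K) :
    dsc (crossVec v u) = bf v u ^ 2 - 4 * (qf v * qf u) := by
  show (v 2 * u 0 - v 0 * u 2) ^ 2 - 4 * ((v 1 * u 2 - v 2 * u 1) * (v 0 * u 1 - v 1 * u 0))
      = (2 * (v 1 * u 1) - v 0 * u 2 - v 2 * u 0) ^ 2
        - 4 * ((v 1 ^ 2 - v 0 * v 2) * (u 1 ^ 2 - u 0 * u 2)); ring

lemma triple_cross (v u w : Fin 3 → K) :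
    crossVec (crossVec v u) w = dotV v w • u - dotV u w • v := by
  refine vec_ext ?_ ?_ ?_
  · show (v 2 * u 0 - v 0 * u 2) * w 2 - (v 0 * u 1 - v 1 * u 0) * w 1
        = (v 0 * w 0 + v 1 * w 1 + v 2 * w 2) * u 0
          - (u 0 * w 0 + u 1 * w 1 + u 2 * w 2) * v 0; ring
  · show (v 0 * u 1 - v 1 * u 0) * w 0 - (v 1 * u 2 - v 2 * u 1) * w 2
        = (v 0 * w 0 + v 1 * w 1 + v 2 * w 2) * u 1
          - (u 0 * w 0 + u 1 * w 1 + u 2 * w 2) * v 1; ring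
  · show (v 1 * u 2 - v 2 * u 1) * w 1 - (v 2 * u 0 - v 0 * u 2) * w 0
        = (v 0 * w 0 + v 1 * w 1 + v 2 * w 2) * u 2
          - (u 0 * w 0 + u 1 * w 1 + u 2 * w 2) * v 2; ring

lemma smul_of_cross_eq_zero {v u : Fin 3 → K} (hv : v ≠ 0)
    (h : crossVec v u = 0) : ∃ s : K, u = s • v := by
  have h0 : v 1 * u 2 - v 2 * u 1 = 0 := congrFun h 0
  have h1 : v 2 * u 0 - v 0 * u 2 = 0 := congrFun h 1
  have h3 : v 0 * u 1 - v 1 * u 0 = 0 := congrFun h 2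
  have hv' : ¬(v 0 = 0 ∧ v 1 = 0 ∧ v 2 = 0) := fun hh => hv ((vec_eq_zero_iff v).mpr hh)
  by_cases hv0 : v 0 = 0
  · by_cases hv1 : v 1 = 0
    · have hv2 : v 2 ≠ 0 := fun hh => hv' ⟨hv0, hv1, hh⟩
      refine ⟨u 2 / v 2, vec_ext ?_ ?_ ?_⟩
      · show u 0 = u 2 / v 2 * v 0
        rw [div_mul_eq_mul_div, eq_div_iff hv2]
        linear_combination h1
      · show u 1 = u 2 / v 2 * v 1
        rw [div_mul_eq_mul_div, eq_div_iff hv2]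
        linear_combination -h0
      · show u 2 = u 2 / v 2 * v 2
        field_simp
    · refine ⟨u 1 / v 1, vec_ext ?_ ?_ ?_⟩
      · show u 0 = u 1 / v 1 * v 0
        rw [div_mul_eq_mul_div, eq_div_iff hv1]
        linear_combination -h3
      · show u 1 = u 1 / v 1 * v 1
        field_simp
      · show u 2 = u 1 / v 1 * v 2
        rw [div_mul_eq_mul_div, eq_div_iff hv1]
        linear_combination h0
  · refine ⟨u 0 / v 0, vec_ext ?_ ?_ ?_⟩
    · show u 0 = u 0 / v 0 * v 0
      field_simp
    · show u 1 = u 0 / v 0 * v 1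
      rw [div_mul_eq_mul_div, eq_div_iff hv0]
      linear_combination h3
    · show u 2 = u 0 / v 0 * v 2
      rw [div_mul_eq_mul_div, eq_div_iff hv0]
      linear_combination -h1

lemma perp_perp {v u w : Fin 3 → K} (hcr : crossVec v u ≠ 0)
    (h1 : dotV v w = 0) (h2 : dotV u w = 0) : ∃ s : K, w = s • crossVec v u := by
  apply smul_of_cross_eq_zero hcr
  rw [triple_cross, h1, h2]
  simp

/-! ### Projectivization helpers -/

lemma rep_mk_smul (v : Fin 3 → K) (hv : v ≠ 0) :
    ∃ s : K, s ≠ 0 ∧ (Projectivization.mk K v hv).rep = s • v := by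
  have h := Projectivization.mk_rep (Projectivization.mk K v hv)
  rw [Projectivization.mk_eq_mk_iff] at h
  obtain ⟨a, ha⟩ := h
  exact ⟨(a : K), a.ne_zero, by rw [← ha]; rfl⟩

lemma mk_smul_eq (v : Fin 3 → K) (hv : v ≠ 0) {s : K} (hs : s ≠ 0) (hsv : s • v ≠ 0) :
    Projectivization.mk K (s • v) hsv = Projectivization.mk K v hv := by
  rw [Projectivization.mk_eq_mk_iff]
  exact ⟨Units.mk0 s hs, rfl⟩

lemma pt_eq_of_smul_rep {a b : Pt K} {s : K} (h : a.rep = s • b.rep) : a = b := by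
  have hs : s ≠ 0 := by
    intro h0
    apply a.rep_nonzero
    rw [h, h0, zero_smul]
  conv_rhs => rw [← Projectivization.mk_rep b]
  conv_lhs => rw [← Projectivization.mk_rep a]
  have h2 : a.rep = s • b.rep := h
  calc Projectivization.mk K a.rep a.rep_nonzero
      = Projectivization.mk K (s • b.rep) (by rw [← h2]; exact a.rep_nonzero) := by
        congr 1
    _ = Projectivization.mk K b.rep b.rep_nonzero := mk_smul_eq _ b.rep_nonzero hs _

lemma cross_rep_ne_zero {a b : Pt K} (hab : a ≠ b) : crossVec a.rep b.rep ≠ 0 := by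
  intro h
  obtain ⟨s, hs⟩ := smul_of_cross_eq_zero a.rep_nonzero h
  exact hab (pt_eq_of_smul_rep hs).symm

/-- The conic point with parameter `t`. -/
def cpt (t : K) : Pt K :=
  Projectivization.mk K ![1, t, t ^ 2] (by
    intro h
    have h0 : (1 : K) = 0 := congrFun h 0
    exact one_ne_zero h0)

/-- The conic point at infinity. -/
def cptInf : Pt K :=
  Projectivization.mk K ![0, 0, 1] (by
    intro h
    have h0 : (1 : K) = 0 := congrFun h 2
    exact one_ne_zero h0)

lemma onConic_iff (p : Pt K) : OnConic p ↔ qf p.rep = 0 := Iff.rfl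

lemma qf_cpt_vec (t : K) : qf ![1, t, t ^ 2] = 0 := by
  show t ^ 2 - 1 * t ^ 2 = 0; ring

lemma onConic_cpt (t : K) : OnConic (cpt t) := by
  rw [onConic_iff]
  obtain ⟨s, hs, hrep⟩ := rep_mk_smul (K := K) ![1, t, t ^ 2] (by
    intro h; exact one_ne_zero (congrFun h 0))
  rw [cpt] at *
  rw [hrep, qf_smul, qf_cpt_vec, mul_zero]

lemma onConic_cptInf : OnConic (cptInf (K := K)) := by
  rw [onConic_iff]
  obtain ⟨s, hs, hrep⟩ := rep_mk_smul (K := K) ![0, 0, 1] (by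
    intro h; exact one_ne_zero (congrFun h 2))
  rw [cptInf] at *
  rw [hrep]
  have : qf (K := K) ![0, 0, 1] = 0 := by show (0:K)^2 - 0 * 1 = 0; ring
  rw [qf_smul, this, mul_zero]

lemma incid_mk_right (p : Pt K) (w : Fin 3 → K) (hw : w ≠ 0) :
    Incid p (Projectivization.mk K w hw) ↔ dotV p.rep w = 0 := by
  obtain ⟨s, hs, hrep⟩ := rep_mk_smul w hw
  unfold Incid
  rw [hrep, dotV_smul_right, mul_eq_zero]
  simp [hs]

lemma incid_mk_left (v : Fin 3 → K) (hv : v ≠ 0) (ℓ : Pt K) :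
    Incid (Projectivization.mk K v hv) ℓ ↔ dotV v ℓ.rep = 0 := by
  obtain ⟨s, hs, hrep⟩ := rep_mk_smul v hv
  unfold Incid
  rw [hrep, dotV_smul_left, mul_eq_zero]
  simp [hs]

lemma incid_cpt (t : K) (ℓ : Pt K) :
    Incid (cpt t) ℓ ↔ ℓ.rep 0 + t * ℓ.rep 1 + t ^ 2 * ℓ.rep 2 = 0 := by
  rw [cpt, incid_mk_left]
  show 1 * ℓ.rep 0 + t * ℓ.rep 1 + t ^ 2 * ℓ.rep 2 = 0 ↔ _
  constructor <;> intro h <;> linear_combination h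

lemma incid_cptInf (ℓ : Pt K) : Incid (cptInf) ℓ ↔ ℓ.rep 2 = 0 := by
  rw [cptInf, incid_mk_left]
  show 0 * ℓ.rep 0 + 0 * ℓ.rep 1 + 1 * ℓ.rep 2 = 0 ↔ _
  constructor <;> intro h <;> linear_combination h

lemma cpt_inj {t t' : K} (h : cpt (K := K) t = cpt t') : t = t' := by
  rw [cpt, cpt, Projectivization.mk_eq_mk_iff] at h
  obtain ⟨a, ha⟩ := h
  have h0 : (a : K) * 1 = 1 := congrFun ha 0
  have h1 : (a : K) * t' = t := congrFun ha 1
  rw [mul_one] at h0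
  rw [h0, one_mul] at h1
  exact h1.symm

lemma cpt_ne_cptInf (t : K) : cpt (K := K) t ≠ cptInf := by
  intro h
  rw [cpt, cptInf, Projectivization.mk_eq_mk_iff] at h
  obtain ⟨a, ha⟩ := h
  have h0 : (a : K) * 0 = 1 := congrFun ha 0
  rw [mul_zero] at h0
  exact zero_ne_one h0

lemma conic_classify {p : Pt K} (h : OnConic p) : p = cptInf ∨ ∃ t, p = cpt t := by
  rw [onConic_iff] at h
  set v := p.rep with hv
  have hq : v 1 ^ 2 - v 0 * v 2 = 0 := h
  by_cases h0 : v 0 = 0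
  · left
    have h1 : v 1 = 0 := by
      have : v 1 ^ 2 = 0 := by linear_combination hq + v 2 * h0
      exact pow_eq_zero_iff (n := 2) (by norm_num) |>.mp this
    have h2 : v 2 ≠ 0 := by
      intro h2
      exact p.rep_nonzero ((vec_eq_zero_iff v).mpr ⟨h0, h1, h2⟩)
    have hrep : v = v 2 • ![0, 0, 1] := by
      refine vec_ext ?_ ?_ ?_
      · show v 0 = v 2 * 0; rw [h0, mul_zero]
      · show v 1 = v 2 * 0; rw [h1, mul_zero]
      · show v 2 = v 2 * 1; rw [mul_one]
    rw [cptInf, ← Projectivization.mk_rep p]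
    calc Projectivization.mk K p.rep p.rep_nonzero
        = Projectivization.mk K (v 2 • ![0, 0, 1]) (by rw [← hrep]; exact p.rep_nonzero) := by
          congr 1
      _ = _ := mk_smul_eq _ _ h2 _
  · right
    refine ⟨v 1 / v 0, ?_⟩
    have hrep : v = v 0 • ![1, v 1 / v 0, (v 1 / v 0) ^ 2] := by
      refine vec_ext ?_ ?_ ?_
      · show v 0 = v 0 * 1; rw [mul_one]
      · show v 1 = v 0 * (v 1 / v 0); field_simp
      · show v 2 = v 0 * (v 1 / v 0) ^ 2
        field_simp
        linear_combination -hq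
    rw [cpt, ← Projectivization.mk_rep p]
    calc Projectivization.mk K p.rep p.rep_nonzero
        = Projectivization.mk K (v 0 • ![1, v 1 / v 0, (v 1 / v 0) ^ 2])
            (by rw [← hrep]; exact p.rep_nonzero) := by congr 1
      _ = _ := mk_smul_eq _ (by intro hh; exact one_ne_zero (congrFun hh 0)) h0 _

/-! ### Lines versus the conic: discriminant trichotomy -/

def conicLine (ℓ : Pt K) : Set (Pt K) := {p : Pt K | OnConic p ∧ Incid p ℓ}

lemma tangent_def (ℓ : Pt K) : Tangent ℓ ↔ (conicLine ℓ).ncard = 1 := Iff.rfl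
lemma secant_def (ℓ : Pt K) : Secant ℓ ↔ (conicLine ℓ).ncard = 2 := Iff.rfl
lemma passant_def (ℓ : Pt K) : Passant ℓ ↔ (conicLine ℓ).ncard = 0 := Iff.rfl

/-- The polar line of a point (the tangent line, for a point of the conic). -/
def lineOf (c : Pt K) : Pt K :=
  if h : mvec c.rep ≠ 0 then Projectivization.mk K _ h else c

lemma lineOf_rep (h2 : (2 : K) ≠ 0) (c : Pt K) :
    ∃ s : K, s ≠ 0 ∧ (lineOf c).rep = s • mvec c.rep := by
  rw [lineOf, dif_pos (mvec_ne_zero h2 c.rep_nonzero)]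
  exact rep_mk_smul _ _

lemma incid_lineOf (h2 : (2 : K) ≠ 0) (a c : Pt K) :
    Incid a (lineOf c) ↔ bf a.rep c.rep = 0 := by
  rw [lineOf, dif_pos (mvec_ne_zero h2 c.rep_nonzero), incid_mk_right, dotV_mvec]

lemma isSquare_dsc_of_mem {ℓ p : Pt K} (hp : p ∈ conicLine ℓ) :
    IsSquare (dsc ℓ.rep) := by
  obtain ⟨hOn, hInc⟩ := hp
  set v := p.rep with hv
  set w := ℓ.rep with hw
  have hq : v 1 ^ 2 - v 0 * v 2 = 0 := hOn
  have hdt : v 0 * w 0 + v 1 * w 1 + v 2 * w 2 = 0 := hInc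
  by_cases h0 : v 0 = 0
  · have h1 : v 1 = 0 := by
      have : v 1 ^ 2 = 0 := by linear_combination hq + v 2 * h0
      exact pow_eq_zero_iff (n := 2) (by norm_num) |>.mp this
    have h22 : v 2 ≠ 0 := by
      intro hh
      exact p.rep_nonzero ((vec_eq_zero_iff v).mpr ⟨h0, h1, hh⟩)
    have hw2 : w 2 = 0 := by
      have : v 2 * w 2 = 0 := by linear_combination hdt - w 0 * h0 - w 1 * h1
      rcases mul_eq_zero.mp this with h | h
      · exact absurd h h22
      · exact h
    exact ⟨w 1, by show w 1 ^ 2 - 4 * (w 0 * w 2) = w 1 * w 1; rw [hw2]; ring⟩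
  · refine ⟨(2 * w 2 * v 1 + w 1 * v 0) / v 0, ?_⟩
    have key : (w 1 ^ 2 - 4 * (w 0 * w 2)) * v 0 ^ 2 = (2 * w 2 * v 1 + w 1 * v 0) ^ 2 := by
      linear_combination (-4 * w 2 ^ 2) * hq + (-4 * (w 2 * v 0)) * hdt
    show w 1 ^ 2 - 4 * (w 0 * w 2) = _
    rw [div_mul_div_comm, eq_div_iff (mul_ne_zero h0 h0)]
    linear_combination key

lemma pt_eq_of_common_vec {a b : Pt K} {u : Fin 3 → K} {t s : K} (hs : s ≠ 0)
    (ha : a.rep = t • u) (hb : b.rep = s • u) : a = b := by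
  apply pt_eq_of_smul_rep (s := t / s)
  rw [hb, smul_smul, div_mul_cancel₀ _ hs, ha]

lemma tangent_structure (h2 : (2 : K) ≠ 0) {ℓ : Pt K} (hd : dsc ℓ.rep = 0) :
    ∃ c : Pt K, OnConic c ∧ conicLine ℓ = {c} ∧ ℓ = lineOf c := by
  set w := ℓ.rep with hw
  have hd' : w 1 ^ 2 - 4 * (w 0 * w 2) = 0 := hd
  by_cases hw2 : w 2 = 0
  · have hw1 : w 1 = 0 := by
      have : w 1 ^ 2 = 0 := by linear_combination hd' + 4 * w 0 * hw2
      exact pow_eq_zero_iff (n := 2) (by norm_num) |>.mp this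
    have hw0 : w 0 ≠ 0 := by
      intro hh
      exact ℓ.rep_nonzero ((vec_eq_zero_iff w).mpr ⟨hh, hw1, hw2⟩)
    refine ⟨cptInf, onConic_cptInf, ?_, ?_⟩
    · ext p
      simp only [conicLine, Set.mem_setOf_eq, Set.mem_singleton_iff]
      constructor
      · rintro ⟨hOn, hInc⟩
        rcases conic_classify hOn with h | ⟨t, rfl⟩
        · exact h
        · exfalso
          rw [incid_cpt] at hInc
          rw [← hw, hw1, hw2] at hInc
          apply hw0
          linear_combination hInc
      · rintro rfl
        exact ⟨onConic_cptInf, (incid_cptInf ℓ).mpr hw2⟩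
    · -- ℓ = lineOf cptInf
      obtain ⟨s', hs', hrep'⟩ := lineOf_rep h2 (cptInf (K := K))
      obtain ⟨s'', hs'', hrep''⟩ := rep_mk_smul (K := K) ![0, 0, 1]
        (by intro hh; exact one_ne_zero (congrFun hh 2))
      have hcrep : (cptInf (K := K)).rep = s'' • ![0, 0, 1] := hrep''
      have hb : (lineOf (cptInf (K := K))).rep = (s' * s'') • ![(-1 : K), 0, 0] := by
        rw [hrep', hcrep, mvec_smul, smul_smul]
        congr 1
        refine vec_ext ?_ ?_ ?_
        · show -(1 : K) = -1; rfl
        · show 2 * (0 : K) = 0; ring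
        · show -(0 : K) = 0; ring
      have ha : ℓ.rep = (-(w 0)) • ![(-1 : K), 0, 0] := by
        refine vec_ext ?_ ?_ ?_
        · show w 0 = -(w 0) * (-1); ring
        · show w 1 = -(w 0) * 0; rw [hw1]; ring
        · show w 2 = -(w 0) * 0; rw [hw2]; ring
      exact pt_eq_of_common_vec (mul_ne_zero hs' hs'') ha hb
  · set t0 := -(w 1) / (2 * w 2) with ht0
    have h2w2 : (2 : K) * w 2 ≠ 0 := mul_ne_zero h2 hw2
    refine ⟨cpt t0, onConic_cpt t0, ?_, ?_⟩
    · ext p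
      simp only [conicLine, Set.mem_setOf_eq, Set.mem_singleton_iff]
      constructor
      · rintro ⟨hOn, hInc⟩
        rcases conic_classify hOn with rfl | ⟨t, rfl⟩
        · exact absurd ((incid_cptInf ℓ).mp hInc) hw2
        · rw [incid_cpt, ← hw] at hInc
          have h4 : (2 * w 2 * t + w 1) ^ 2 = 0 := by
            linear_combination 4 * w 2 * hInc + hd'
          have h5 : 2 * w 2 * t + w 1 = 0 := pow_eq_zero_iff (n := 2) (by norm_num) |>.mp h4
          have : t = t0 := by
            rw [ht0, eq_div_iff h2w2]
            linear_combination h5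
          rw [this]
      · rintro rfl
        refine ⟨onConic_cpt t0, ?_⟩
        rw [incid_cpt, ← hw, ht0]
        field_simp
        linear_combination -hd'
    · obtain ⟨s', hs', hrep'⟩ := lineOf_rep h2 (cpt t0)
      obtain ⟨s'', hs'', hrep''⟩ := rep_mk_smul (K := K) ![1, t0, t0 ^ 2]
        (by intro hh; exact one_ne_zero (congrFun hh 0))
      have hcrep : (cpt t0).rep = s'' • ![1, t0, t0 ^ 2] := hrep''
      have hb : (lineOf (cpt t0)).rep = (s' * s'') • ![-(t0 ^ 2), 2 * t0, (-1 : K)] := by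
        rw [hrep', hcrep, mvec_smul, smul_smul]
        exact congrArg (fun z => (s' * s'') • z) (vec_ext rfl rfl rfl)
      have ha : ℓ.rep = (-(w 2)) • ![-(t0 ^ 2), 2 * t0, (-1 : K)] := by
        refine vec_ext ?_ ?_ ?_
        · show w 0 = -(w 2) * (-(t0 ^ 2))
          rw [ht0]
          field_simp
          linear_combination -hd'
        · show w 1 = -(w 2) * (2 * t0)
          rw [ht0]
          field_simp
        · show w 2 = -(w 2) * (-1); ring
      exact pt_eq_of_common_vec (mul_ne_zero hs' hs'') ha hb

lemma secant_structure (h2 : (2 : K) ≠ 0) {ℓ : Pt K} {u : K} (hu : u ≠ 0)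
    (hd : dsc ℓ.rep = u * u) :
    ∃ c d : Pt K, c ≠ d ∧ OnConic c ∧ OnConic d ∧ conicLine ℓ = {c, d} := by
  set w := ℓ.rep with hw
  have hd' : w 1 ^ 2 - 4 * (w 0 * w 2) = u * u := hd
  by_cases hw2 : w 2 = 0
  · have hw1 : w 1 ≠ 0 := by
      intro hh
      apply hu
      have : u * u = 0 := by linear_combination -hd' + w 1 * hh + (-4 * w 0) * hw2
      rcases mul_eq_zero.mp this with h | h <;> exact h
    refine ⟨cptInf, cpt (-(w 0) / w 1), (cpt_ne_cptInf _).symm, onConic_cptInf,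
      onConic_cpt _, ?_⟩
    ext p
    simp only [conicLine, Set.mem_setOf_eq, Set.mem_insert_iff, Set.mem_singleton_iff]
    constructor
    · rintro ⟨hOn, hInc⟩
      rcases conic_classify hOn with h | ⟨t, rfl⟩
      · exact Or.inl h
      · right
        rw [incid_cpt, ← hw] at hInc
        have ht : t = -(w 0) / w 1 := by
          rw [eq_div_iff hw1]
          linear_combination hInc - t ^ 2 * hw2
        rw [ht]
    · rintro (rfl | rfl)
      · exact ⟨onConic_cptInf, (incid_cptInf ℓ).mpr hw2⟩
      · refine ⟨onConic_cpt _, ?_⟩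
        rw [incid_cpt, ← hw, hw2]
        field_simp
        ring
    
  · set t1 := (-(w 1) + u) / (2 * w 2) with ht1
    set t2 := (-(w 1) - u) / (2 * w 2) with ht2
    have h2w2 : (2 : K) * w 2 ≠ 0 := mul_ne_zero h2 hw2
    have ht12 : t1 ≠ t2 := by
      intro hh
      apply hu
      rw [ht1, ht2, div_eq_div_iff h2w2 h2w2] at hh
      have : 2 * u * (2 * w 2) = 0 := by linear_combination hh
      rcases mul_eq_zero.mp this with h | h
      · rcases mul_eq_zero.mp h with h' | h'
        · exact absurd h' h2
        · exact h'
      · exact absurd h h2w2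
    refine ⟨cpt t1, cpt t2, fun hh => ht12 (cpt_inj hh), onConic_cpt _, onConic_cpt _, ?_⟩
    ext p
    simp only [conicLine, Set.mem_setOf_eq, Set.mem_insert_iff, Set.mem_singleton_iff]
    constructor
    · rintro ⟨hOn, hInc⟩
      rcases conic_classify hOn with rfl | ⟨t, rfl⟩
      · exact absurd ((incid_cptInf ℓ).mp hInc) hw2
      · rw [incid_cpt, ← hw] at hInc
        have hfac : (2 * w 2 * t + w 1 - u) * (2 * w 2 * t + w 1 + u) = 0 := by
          linear_combination 4 * w 2 * hInc + hd'
        rcases mul_eq_zero.mp hfac with h | h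
        · left
          have : t = t1 := by
            rw [ht1, eq_div_iff h2w2]
            linear_combination h
          rw [this]
        · right
          have : t = t2 := by
            rw [ht2, eq_div_iff h2w2]
            linear_combination h
          rw [this]
    · rintro (rfl | rfl)
      · refine ⟨onConic_cpt _, ?_⟩
        rw [incid_cpt, ← hw, ht1]
        field_simp
        linear_combination -hd'
      · refine ⟨onConic_cpt _, ?_⟩
        rw [incid_cpt, ← hw, ht2]
        field_simp
        linear_combination -hd'

lemma conicLine_empty_of_not_isSquare {ℓ : Pt K} (h : ¬ IsSquare (dsc ℓ.rep)) :
    conicLine ℓ = ∅ := by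
  rw [Set.eq_empty_iff_forall_notMem]
  intro p hp
  exact h (isSquare_dsc_of_mem hp)

lemma passant_iff (h2 : (2 : K) ≠ 0) (ℓ : Pt K) :
    Passant ℓ ↔ ¬ IsSquare (dsc ℓ.rep) := by
  constructor
  · intro hP hSq
    obtain ⟨r, hr⟩ := hSq
    rw [passant_def] at hP
    by_cases hr0 : r = 0
    · rw [hr0, mul_zero] at hr
      obtain ⟨c, -, hset, -⟩ := tangent_structure h2 hr
      rw [hset, Set.ncard_singleton] at hP
      exact one_ne_zero hP
    · obtain ⟨c, d, hcd, -, -, hset⟩ := secant_structure h2 hr0 hr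
      rw [hset, Set.ncard_pair hcd] at hP
      exact two_ne_zero hP
  · intro hNS
    rw [passant_def, conicLine_empty_of_not_isSquare hNS]
    exact Set.ncard_empty _

lemma tangent_iff (h2 : (2 : K) ≠ 0) (ℓ : Pt K) :
    Tangent ℓ ↔ dsc ℓ.rep = 0 := by
  constructor
  · intro hT
    by_contra hne
    rw [tangent_def] at hT
    by_cases hSq : IsSquare (dsc ℓ.rep)
    · obtain ⟨r, hr⟩ := hSq
      have hr0 : r ≠ 0 := by
        intro hh; rw [hh, mul_zero] at hr; exact hne hr
      obtain ⟨c, d, hcd, -, -, hset⟩ := secant_structure h2 hr0 hr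
      rw [hset, Set.ncard_pair hcd] at hT
      norm_num at hT
    · rw [conicLine_empty_of_not_isSquare hSq, Set.ncard_empty] at hT
      norm_num at hT
  · intro hd
    obtain ⟨c, -, hset, -⟩ := tangent_structure h2 hd
    rw [tangent_def, hset, Set.ncard_singleton]

lemma secant_iff (h2 : (2 : K) ≠ 0) (ℓ : Pt K) :
    Secant ℓ ↔ dsc ℓ.rep ≠ 0 ∧ IsSquare (dsc ℓ.rep) := by
  constructor
  · intro hS
    rw [secant_def] at hS
    by_cases hSq : IsSquare (dsc ℓ.rep)
    · refine ⟨?_, hSq⟩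
      intro hd
      obtain ⟨c, -, hset, -⟩ := tangent_structure h2 hd
      rw [hset, Set.ncard_singleton] at hS
      norm_num at hS
    · rw [conicLine_empty_of_not_isSquare hSq, Set.ncard_empty] at hS
      norm_num at hS
  · rintro ⟨hne, r, hr⟩
    have hr0 : r ≠ 0 := by
      intro hh; rw [hh, mul_zero] at hr; exact hne hr
    obtain ⟨c, d, hcd, -, -, hset⟩ := secant_structure h2 hr0 hr
    rw [secant_def, hset, Set.ncard_pair hcd]

/-! ### Contact points -/

def contacts (e : Pt K) : Set (Pt K) := {c : Pt K | OnConic c ∧ bf e.rep c.rep = 0}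

lemma tangent_lineOf (h2 : (2 : K) ≠ 0) {c : Pt K} (hc : OnConic c) :
    Tangent (lineOf c) := by
  rw [tangent_iff h2]
  obtain ⟨s, hs, hrep⟩ := lineOf_rep h2 c
  rw [hrep, dsc_smul, dsc_mvec, (onConic_iff c).mp hc]
  ring

lemma smul_balance {s s' : K} (hs' : s' ≠ 0) {X Y : Fin 3 → K}
    (h : s • X = s' • Y) : Y = (s / s') • X := by
  funext i
  have hi : s * X i = s' * Y i := congrFun h i
  show Y i = s / s' * X i
  rw [div_mul_eq_mul_div, eq_div_iff hs']
  linear_combination -hi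

lemma lineOf_inj (h2 : (2 : K) ≠ 0) {c d : Pt K} (h : lineOf c = lineOf d) :
    c = d := by
  obtain ⟨s, hs, hrep⟩ := lineOf_rep h2 c
  obtain ⟨s', hs', hrep'⟩ := lineOf_rep h2 d
  have hsm : s • mvec c.rep = s' • mvec d.rep := by rw [← hrep, ← hrep', h]
  have hmd : mvec d.rep = (s / s') • mvec c.rep := smul_balance hs' hsm
  have hd : d.rep = (s / s') • c.rep := mvec_eq_smul h2 hmd
  exact (pt_eq_of_smul_rep hd).symm

lemma tangents_through_eq_image (h2 : (2 : K) ≠ 0) (e : Pt K) :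
    {ℓ : Pt K | Tangent ℓ ∧ Incid e ℓ} = lineOf '' contacts e := by
  ext ℓ
  constructor
  · rintro ⟨hT, hI⟩
    obtain ⟨c, hOn, hset, hEq⟩ := tangent_structure h2 ((tangent_iff h2 ℓ).mp hT)
    refine ⟨c, ⟨hOn, ?_⟩, hEq.symm⟩
    rw [← incid_lineOf h2, ← hEq]
    exact hI
  · rintro ⟨c, ⟨hOn, hbf⟩, rfl⟩
    exact ⟨tangent_lineOf h2 hOn, (incid_lineOf h2 e c).mpr hbf⟩

lemma ncard_tangents (h2 : (2 : K) ≠ 0) (e : Pt K) :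
    {ℓ : Pt K | Tangent ℓ ∧ Incid e ℓ}.ncard = (contacts e).ncard := by
  rw [tangents_through_eq_image h2 e]
  exact Set.ncard_image_of_injOn (fun c _ d _ h => lineOf_inj h2 h)

lemma external_iff_contacts (h2 : (2 : K) ≠ 0) (e : Pt K) :
    External e ↔ (contacts e).ncard = 2 := by
  unfold External
  rw [ncard_tangents h2 e]

lemma internal_no_contact (h2 : (2 : K) ≠ 0) {x c : Pt K} (hx : Internal x)
    (hc : OnConic c) : bf x.rep c.rep ≠ 0 := by
  intro hbf
  have h0 : (contacts x).ncard = 0 := by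
    rw [← ncard_tangents h2 x]
    exact hx
  have hempty : contacts x = ∅ := (Set.ncard_eq_zero (Set.toFinite _)).mp h0
  have hmem : c ∈ contacts x := ⟨hc, hbf⟩
  rw [hempty] at hmem
  exact hmem

lemma bf_conic_ne (h2 : (2 : K) ≠ 0) {c d : Pt K} (hc : OnConic c) (hd : OnConic d)
    (hcd : c ≠ d) : bf c.rep d.rep ≠ 0 := by
  intro hbf
  set a := c.rep with ha
  set b := d.rep with hb
  have hqa : a 1 ^ 2 - a 0 * a 2 = 0 := hc
  have hqb : b 1 ^ 2 - b 0 * b 2 = 0 := hd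
  have hbf' : 2 * (a 1 * b 1) - a 0 * b 2 - a 2 * b 0 = 0 := hbf
  apply cross_rep_ne_zero hcd
  have e0 : (a 1 * b 2 - a 2 * b 1) ^ 2 = 0 := by
    linear_combination b 2 ^ 2 * hqa + a 2 ^ 2 * hqb + (-(a 2 * b 2)) * hbf'
  have e1 : (a 2 * b 0 - a 0 * b 2) ^ 2 = 0 := by
    linear_combination (4 * b 1 ^ 2 - 4 * (b 1 ^ 2 - b 0 * b 2)) * hqa
      + 4 * a 1 ^ 2 * hqb
      + (2 * (a 1 * b 1) - a 0 * b 2 - a 2 * b 0 - 4 * (a 1 * b 1)) * hbf'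
  have e2 : (a 0 * b 1 - a 1 * b 0) ^ 2 = 0 := by
    linear_combination b 0 ^ 2 * hqa + a 0 ^ 2 * hqb + (-(a 0 * b 0)) * hbf'
  refine vec_ext ?_ ?_ ?_
  · exact pow_eq_zero_iff (n := 2) (by norm_num) |>.mp e0
  · exact pow_eq_zero_iff (n := 2) (by norm_num) |>.mp e1
  · exact pow_eq_zero_iff (n := 2) (by norm_num) |>.mp e2

lemma cross_mvec_ne_zero (h2 : (2 : K) ≠ 0) {c d : Pt K} (hcd : c ≠ d) :
    crossVec (mvec c.rep) (mvec d.rep) ≠ 0 := by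
  intro h
  obtain ⟨s, hs⟩ := smul_of_cross_eq_zero (mvec_ne_zero h2 c.rep_nonzero) h
  have hd : d.rep = s • c.rep := mvec_eq_smul h2 hs
  exact hcd (pt_eq_of_smul_rep hd).symm

lemma contacts_eq_conicLine (h2 : (2 : K) ≠ 0) (e : Pt K) :
    contacts e = conicLine (lineOf e) := by
  ext c
  simp only [contacts, conicLine, Set.mem_setOf_eq]
  constructor
  · rintro ⟨hOn, hbf⟩
    exact ⟨hOn, (incid_lineOf h2 c e).mpr (by rw [bf_comm]; exact hbf)⟩
  · rintro ⟨hOn, hI⟩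
    refine ⟨hOn, ?_⟩
    rw [bf_comm]
    exact (incid_lineOf h2 c e).mp hI

lemma pole_external (h2 : (2 : K) ≠ 0) {c d : Pt K} (hc : OnConic c) (hd : OnConic d)
    (hcd : c ≠ d) :
    ∃ E : Pt K, External E ∧ bf E.rep c.rep = 0 ∧ bf E.rep d.rep = 0 ∧
      contacts E = {c, d} := by
  set y := crossVec (mvec c.rep) (mvec d.rep) with hy
  have hyne : y ≠ 0 := cross_mvec_ne_zero h2 hcd
  set E := Projectivization.mk K y hyne with hE
  obtain ⟨s, hs, hrep⟩ := rep_mk_smul y hyne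
  have hbfc : bf E.rep c.rep = 0 := by
    rw [hE, hrep, bf_smul_left, ← dotV_mvec, dotV_comm, hy, dot_cross_left, mul_zero]
  have hbfd : bf E.rep d.rep = 0 := by
    rw [hE, hrep, bf_smul_left, ← dotV_mvec, dotV_comm, hy, dot_cross_right, mul_zero]
  have hcmem : c ∈ contacts E := ⟨hc, hbfc⟩
  have hdmem : d ∈ contacts E := ⟨hd, hbfd⟩
  have hCL : contacts E = conicLine (lineOf E) := contacts_eq_conicLine h2 E
  -- the polar line of E is a secant
  have hSq : IsSquare (dsc (lineOf E).rep) := by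
    apply isSquare_dsc_of_mem (p := c)
    rw [← hCL]
    exact hcmem
  have hne : dsc (lineOf E).rep ≠ 0 := by
    intro h0
    obtain ⟨c₀, -, hset, -⟩ := tangent_structure h2 h0
    rw [hCL, hset] at hcmem hdmem
    exact hcd (hcmem.trans hdmem.symm)
  obtain ⟨r, hr⟩ := hSq
  have hr0 : r ≠ 0 := fun hh => hne (by rw [hr, hh, mul_zero])
  obtain ⟨c1', c2', h12', -, -, hset⟩ := secant_structure h2 hr0 hr
  have hpair : contacts E = {c, d} := by
    rw [hCL, hset] at hcmem hdmem ⊢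
    rcases hcmem with rfl | rfl <;> rcases hdmem with h | h
    · exact absurd (h.symm) hcd
    · rw [← h]
    · rw [← h, Set.pair_comm]
    · exact absurd (h.symm ▸ rfl : c = d) hcd
  refine ⟨E, ?_, hbfc, hbfd, hpair⟩
  rw [external_iff_contacts h2, hpair, Set.ncard_pair hcd]

lemma contacts_of_external (h2 : (2 : K) ≠ 0) {e : Pt K} (he : External e) :
    ∃ c1 c2 : Pt K, c1 ≠ c2 ∧ OnConic c1 ∧ OnConic c2 ∧
      bf e.rep c1.rep = 0 ∧ bf e.rep c2.rep = 0 ∧ contacts e = {c1, c2} := by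
  rw [external_iff_contacts h2] at he
  obtain ⟨c1, c2, h12, hset⟩ := Set.ncard_eq_two.mp he
  have h1 : c1 ∈ contacts e := by rw [hset]; exact Set.mem_insert _ _
  have h2' : c2 ∈ contacts e := by rw [hset]; exact Set.mem_insert_of_mem _ rfl
  exact ⟨c1, c2, h12, h1.1, h2'.1, h1.2, h2'.2, hset⟩

/-! ### The key discriminant identity -/

lemma key_identity {x c d : Fin 3 → K} (hc : c 1 ^ 2 - c 0 * c 2 = 0)
    (hd : d 1 ^ 2 - d 0 * d 2 = 0) :
    bf (crossVec (mvec c) (mvec d)) x ^ 2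
      - 4 * (qf (crossVec (mvec c) (mvec d)) * qf x)
      = -4 * (bf x c * bf x d * bf c d) := by
  set Y := crossVec (mvec c) (mvec d) with hY
  have hY0 : Y 0 = 2 * c 1 * (-(d 0)) - (-(c 0)) * (2 * d 1) := rfl
  have hY1 : Y 1 = (-(c 0)) * (-(d 2)) - (-(c 2)) * (-(d 0)) := rfl
  have hY2 : Y 2 = (-(c 2)) * (2 * d 1) - 2 * c 1 * (-(d 2)) := rfl
  simp only [bf, qf]
  rw [hY0, hY1, hY2]
  linear_combination
    (4 * x 2 ^ 2 * d 0 ^ 2 - 16 * (x 1 * x 2 * (d 0 * d 1)) + 32 * (x 1 ^ 2 * d 1 ^ 2)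
      - 16 * (x 1 ^ 2 * (d 0 * d 2)) + 8 * (x 0 * x 2 * (d 0 * d 2))
      - 16 * (x 0 * x 1 * (d 1 * d 2)) + 4 * x 0 ^ 2 * d 2 ^ 2) * hc
    + (4 * x 2 ^ 2 * c 0 ^ 2 - 16 * (x 1 * x 2 * (c 0 * c 1)) + 16 * (x 1 ^ 2 * (c 0 * c 2))
      + 8 * (x 0 * x 2 * (c 0 * c 2)) - 16 * (x 0 * x 1 * (c 1 * c 2))
      + 4 * x 0 ^ 2 * c 2 ^ 2) * hd

lemma dsc_lineThrough (h2 : (2 : K) ≠ 0) {e x c1 c2 : Pt K}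
    (hc1 : OnConic c1) (hc2 : OnConic c2) (h12 : c1 ≠ c2)
    (hb1 : bf e.rep c1.rep = 0) (hb2 : bf e.rep c2.rep = 0) (hx : Internal x) :
    ∃ s : K, s ≠ 0 ∧
      dsc ((lineThrough e x).rep)
        = s ^ 2 * (-(bf c1.rep c2.rep) * (bf x.rep c1.rep * bf x.rep c2.rep)) := by
  set y := crossVec (mvec c1.rep) (mvec c2.rep) with hy
  have hyne : y ≠ 0 := cross_mvec_ne_zero h2 h12
  obtain ⟨s0, hs0e⟩ : ∃ s0 : K, e.rep = s0 • y := by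
    apply perp_perp hyne
    · rw [dotV_comm, dotV_mvec]; exact hb1
    · rw [dotV_comm, dotV_mvec]; exact hb2
  have hs0 : s0 ≠ 0 := by
    intro hh
    apply e.rep_nonzero
    rw [hs0e, hh, zero_smul]
  have hex : e ≠ x := by
    intro hh
    exact internal_no_contact h2 hx hc1 (by rw [← hh]; exact hb1)
  have hcr : crossVec e.rep x.rep ≠ 0 := cross_rep_ne_zero hex
  have hLT : lineThrough e x = Projectivization.mk K (crossVec e.rep x.rep) hcr := by
    rw [lineThrough, dif_pos hcr]
  obtain ⟨s1, hs1, hrep⟩ := rep_mk_smul (crossVec e.rep x.rep) hcr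
  have hqc1 : qf c1.rep = 0 := hc1
  have hqc2 : qf c2.rep = 0 := hc2
  have hkey := key_identity (x := x.rep) (c := c1.rep) (d := c2.rep) hqc1 hqc2
  refine ⟨2 * s0 * s1, by simp [h2, hs0, hs1], ?_⟩
  calc dsc ((lineThrough e x).rep)
      = s1 ^ 2 * (bf e.rep x.rep ^ 2 - 4 * (qf e.rep * qf x.rep)) := by
        rw [hLT, hrep, dsc_smul, dsc_cross]
    _ = s1 ^ 2 * s0 ^ 2 * (bf y x.rep ^ 2 - 4 * (qf y * qf x.rep)) := by
        rw [hs0e, bf_smul_left, qf_smul]; ring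
    _ = s1 ^ 2 * s0 ^ 2 * (-4 * (bf x.rep c1.rep * bf x.rep c2.rep * bf c1.rep c2.rep)) := by
        rw [hy, hkey]
    _ = (2 * s0 * s1) ^ 2 * (-(bf c1.rep c2.rep) * (bf x.rep c1.rep * bf x.rep c2.rep)) := by
        ring

/-! ### Quadratic-residue indicator with values in `ZMod 2` -/

def sgn (a : K) : ZMod 2 := if IsSquare a then 0 else 1

lemma isSquare_mul_iff' {a b : K} (ha : a ≠ 0) (hb : b ≠ 0) :
    IsSquare (a * b) ↔ (IsSquare a ↔ IsSquare b) := by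
  have key : quadraticChar K (a * b) = quadraticChar K a * quadraticChar K b :=
    map_mul _ _ _
  rw [← quadraticChar_one_iff_isSquare (mul_ne_zero ha hb),
    ← quadraticChar_one_iff_isSquare ha, ← quadraticChar_one_iff_isSquare hb, key]
  rcases quadraticChar_dichotomy ha with hA | hA <;>
    rcases quadraticChar_dichotomy hb with hB | hB <;> rw [hA, hB] <;> norm_num

lemma sgn_mul {a b : K} (ha : a ≠ 0) (hb : b ≠ 0) : sgn (a * b) = sgn a + sgn b := by
  unfold sgn
  have hAB := isSquare_mul_iff' ha hb
  by_cases hA : IsSquare a <;> by_cases hB : IsSquare b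
  · rw [if_pos hA, if_pos hB, if_pos (hAB.mpr (iff_of_true hA hB))]; decide
  · rw [if_pos hA, if_neg hB, if_neg (fun hs => hB ((hAB.mp hs).mp hA))]; decide
  · rw [if_neg hA, if_pos hB, if_neg (fun hs => hA ((hAB.mp hs).mpr hB))]; decide
  · rw [if_neg hA, if_neg hB, if_pos (hAB.mpr (iff_of_false hA hB))]; decide

lemma isSquare_sq_mul_iff {s z : K} (hs : s ≠ 0) (hz : z ≠ 0) :
    IsSquare (s ^ 2 * z) ↔ IsSquare z := by
  rw [isSquare_mul_iff' (pow_ne_zero 2 hs) hz]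
  have hsq : IsSquare (s ^ 2) := ⟨s, by ring⟩
  simp [hsq]

lemma sgn_eq_one_iff {a : K} : sgn a = 1 ↔ ¬ IsSquare a := by
  unfold sgn
  by_cases hA : IsSquare a
  · rw [if_pos hA]; simp [hA]
  · rw [if_neg hA]; simp [hA]

lemma nsmul_zmod2 {n : ℕ} (hn : Even n) (z : ZMod 2) : n • z = 0 := by
  obtain ⟨m, rfl⟩ := hn
  rw [add_nsmul]
  exact (by decide : ∀ w : ZMod 2, w + w = 0) _

/-! ### The indicator computations -/

lemma passant_ind (h2 : (2 : K) ≠ 0) {e x c1 c2 : Pt K}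
    (hc1 : OnConic c1) (hc2 : OnConic c2) (h12 : c1 ≠ c2)
    (hb1 : bf e.rep c1.rep = 0) (hb2 : bf e.rep c2.rep = 0) (hx : Internal x) :
    (if Passant (lineThrough e x) then (1 : ZMod 2) else 0)
      = sgn (-(bf c1.rep c2.rep)) + (sgn (bf x.rep c1.rep) + sgn (bf x.rep c2.rep)) := by
  obtain ⟨s, hs, hdsc⟩ := dsc_lineThrough h2 hc1 hc2 h12 hb1 hb2 hx
  have hk : -(bf c1.rep c2.rep) ≠ 0 := neg_ne_zero.mpr (bf_conic_ne h2 hc1 hc2 h12)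
  have hB1 : bf x.rep c1.rep ≠ 0 := internal_no_contact h2 hx hc1
  have hB2 : bf x.rep c2.rep ≠ 0 := internal_no_contact h2 hx hc2
  have hz : -(bf c1.rep c2.rep) * (bf x.rep c1.rep * bf x.rep c2.rep) ≠ 0 :=
    mul_ne_zero hk (mul_ne_zero hB1 hB2)
  have hP : Passant (lineThrough e x)
      ↔ ¬ IsSquare (-(bf c1.rep c2.rep) * (bf x.rep c1.rep * bf x.rep c2.rep)) := by
    rw [passant_iff h2, hdsc, isSquare_sq_mul_iff hs hz]
  have hval : (if Passant (lineThrough e x) then (1 : ZMod 2) else 0)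
      = sgn (-(bf c1.rep c2.rep) * (bf x.rep c1.rep * bf x.rep c2.rep)) := by
    by_cases hp : Passant (lineThrough e x)
    · rw [if_pos hp, eq_comm, sgn_eq_one_iff]
      exact hP.mp hp
    · rw [if_neg hp]
      have hsq : IsSquare (-(bf c1.rep c2.rep) * (bf x.rep c1.rep * bf x.rep c2.rep)) := by
        by_contra hns
        exact hp (hP.mpr hns)
      rw [sgn, if_pos hsq]
  rw [hval, sgn_mul hk (mul_ne_zero hB1 hB2), sgn_mul hB1 hB2]

lemma secant_ind (h2 : (2 : K) ≠ 0) {e x c1 c2 : Pt K}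
    (hc1 : OnConic c1) (hc2 : OnConic c2) (h12 : c1 ≠ c2)
    (hb1 : bf e.rep c1.rep = 0) (hb2 : bf e.rep c2.rep = 0) (hx : Internal x) :
    (if ∃ l', Secant l' ∧ Incid x l' ∧ Incid e l' then (1 : ZMod 2) else 0)
      = 1 + (if Passant (lineThrough e x) then (1 : ZMod 2) else 0) := by
  obtain ⟨s, hs, hdsc⟩ := dsc_lineThrough h2 hc1 hc2 h12 hb1 hb2 hx
  have hk : -(bf c1.rep c2.rep) ≠ 0 := neg_ne_zero.mpr (bf_conic_ne h2 hc1 hc2 h12)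
  have hB1 : bf x.rep c1.rep ≠ 0 := internal_no_contact h2 hx hc1
  have hB2 : bf x.rep c2.rep ≠ 0 := internal_no_contact h2 hx hc2
  have hne : dsc ((lineThrough e x).rep) ≠ 0 := by
    rw [hdsc]
    exact mul_ne_zero (pow_ne_zero _ hs) (mul_ne_zero hk (mul_ne_zero hB1 hB2))
  have hex : e ≠ x := by
    intro hh
    exact internal_no_contact h2 hx hc1 (by rw [← hh]; exact hb1)
  have hcr : crossVec e.rep x.rep ≠ 0 := cross_rep_ne_zero hex
  have hLT : lineThrough e x = Projectivization.mk K (crossVec e.rep x.rep) hcr := by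
    rw [lineThrough, dif_pos hcr]
  obtain ⟨s1, hs1, hrep⟩ := rep_mk_smul (crossVec e.rep x.rep) hcr
  have hiff : (∃ l', Secant l' ∧ Incid x l' ∧ Incid e l') ↔ Secant (lineThrough e x) := by
    constructor
    · rintro ⟨l', hS, hxl, hel⟩
      have hleq : l' = lineThrough e x := by
        obtain ⟨t, ht⟩ := perp_perp hcr hel hxl
        have hlt : (lineThrough e x).rep = s1 • crossVec e.rep x.rep := by
          rw [hLT]; exact hrep
        exact pt_eq_of_common_vec hs1 ht hlt
      rw [← hleq]
      exact hS
    · intro hS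
      refine ⟨lineThrough e x, hS, ?_, ?_⟩
      · show dotV x.rep (lineThrough e x).rep = 0
        rw [hLT, hrep, dotV_smul_right, dot_cross_right, mul_zero]
      · show dotV e.rep (lineThrough e x).rep = 0
        rw [hLT, hrep, dotV_smul_right, dot_cross_left, mul_zero]
  by_cases hSq : IsSquare (dsc ((lineThrough e x).rep))
  · rw [if_pos (hiff.mpr ((secant_iff h2 _).mpr ⟨hne, hSq⟩)),
      if_neg (fun hp => ((passant_iff h2 _).mp hp) hSq)]
    decide
  · rw [if_neg (fun hex' => hSq ((secant_iff h2 _).mp (hiff.mp hex')).2),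
      if_pos ((passant_iff h2 _).mpr hSq)]
    decide

lemma sum_passant (h2 : (2 : K) ≠ 0) {e c1 c2 : Pt K} (M' : Finset (Pt K))
    (hMint : ∀ x ∈ M', Internal x) (hMeven : Even M'.card)
    (hc1 : OnConic c1) (hc2 : OnConic c2) (h12 : c1 ≠ c2)
    (hb1 : bf e.rep c1.rep = 0) (hb2 : bf e.rep c2.rep = 0) :
    (∑ x ∈ M', if Passant (lineThrough e x) then (1 : ZMod 2) else 0)
      = (∑ x ∈ M', sgn (bf x.rep c1.rep)) + ∑ x ∈ M', sgn (bf x.rep c2.rep) := by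
  have hcongr : ∀ x ∈ M', (if Passant (lineThrough e x) then (1 : ZMod 2) else 0)
      = sgn (-(bf c1.rep c2.rep)) + (sgn (bf x.rep c1.rep) + sgn (bf x.rep c2.rep)) :=
    fun x hx => passant_ind h2 hc1 hc2 h12 hb1 hb2 (hMint x hx)
  rw [Finset.sum_congr rfl hcongr, Finset.sum_add_distrib, Finset.sum_const,
    nsmul_zmod2 hMeven, zero_add, Finset.sum_add_distrib]

/-- for an external point `p` with tangent lines `T1 ≠ T2`
through it, and `M'` a finite even set of internal points such that every
external point `q0 ≠ p` on `T1` is joined to an odd number of points of `M'`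
by passant lines while `p` is joined to an even number, one has
`χ_{E_{T1}} + χ_{E_{T2}} = Σ_{p' ∈ M'} χ_{N_{Se,E}(p')}` over `F_2`. -/
theorem chi_two_tangents_eq_sum_NSeE
    (K : Type*) [Field K] [Fintype K] (hodd : Odd (Fintype.card K))
    (p T1 T2 : Pt K) (hp : External p)
    (hT1 : Tangent T1) (hpT1 : Incid p T1)
    (hT2 : Tangent T2) (hpT2 : Incid p T2) (hTT : T1 ≠ T2)
    (M' : Finset (Pt K)) (hMint : ∀ x ∈ M', Internal x) (hMeven : Even M'.card)
    (hM1 : ∀ q0 : Pt K, External q0 → q0 ≠ p → Incid q0 T1 →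
      Odd (M'.filter (fun x => Passant (lineThrough q0 x))).card)
    (hM2 : Even (M'.filter (fun x => Passant (lineThrough p x))).card) :
    ∀ e : Pt K, External e →
      ((if Incid e T1 then (1 : ZMod 2) else 0) +
       (if Incid e T2 then (1 : ZMod 2) else 0)) =
        ∑ x ∈ M',
          if ∃ l', Secant l' ∧ Incid x l' ∧ Incid e l' then (1 : ZMod 2) else 0 := by
  intro e he
  have h2 : (2 : K) ≠ 0 := by
    intro hh
    have hchar : ringChar K = 2 :=
      CharP.ringChar_of_prime_eq_zero Nat.prime_two (by exact_mod_cast hh)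
    have heven : Fintype.card K % 2 = 0 := FiniteField.even_card_iff_char_two.mp hchar
    rw [Nat.odd_iff] at hodd
    omega
  obtain ⟨c0, hc0On, hsetT1, hT1eq⟩ := tangent_structure h2 ((tangent_iff h2 T1).mp hT1)
  obtain ⟨c0', hc0'On, hsetT2, hT2eq⟩ := tangent_structure h2 ((tangent_iff h2 T2).mp hT2)
  have hc00' : c0 ≠ c0' := by
    intro hh
    exact hTT (by rw [hT1eq, hT2eq, hh])
  have hpc0 : bf p.rep c0.rep = 0 := by
    rw [← incid_lineOf h2, ← hT1eq]; exact hpT1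
  have hpc0' : bf p.rep c0'.rep = 0 := by
    rw [← incid_lineOf h2, ← hT2eq]; exact hpT2
  have hcontp : contacts p = {c0, c0'} := by
    symm
    apply Set.eq_of_subset_of_ncard_le
    · rintro z (rfl | rfl)
      · exact ⟨hc0On, hpc0⟩
      · exact ⟨hc0'On, hpc0'⟩
    · rw [(external_iff_contacts h2 p).mp hp, Set.ncard_pair hc00']
    · exact Set.toFinite _
  have hfilter : ∀ q0 : Pt K,
      ((M'.filter (fun x => Passant (lineThrough q0 x))).card : ZMod 2)
        = ∑ x ∈ M', if Passant (lineThrough q0 x) then (1 : ZMod 2) else 0 := by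
    intro q0
    rw [Finset.card_filter, Nat.cast_sum]
    exact Finset.sum_congr rfl fun x _ => by split <;> simp
  have hR2 : (∑ x ∈ M', sgn (bf x.rep c0.rep)) + (∑ x ∈ M', sgn (bf x.rep c0'.rep)) = 0 := by
    have hcast : ((M'.filter (fun x => Passant (lineThrough p x))).card : ZMod 2) = 0 := by
      rw [← ZMod.natCast_mod, Nat.even_iff.mp hM2, Nat.cast_zero]
    rw [hfilter p, sum_passant h2 M' hMint hMeven hc0On hc0'On hc00' hpc0 hpc0'] at hcast
    exact hcast
  have hR1 : ∀ c : Pt K, OnConic c → c ≠ c0 → c ≠ c0' →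
      (∑ x ∈ M', sgn (bf x.rep c0.rep)) + (∑ x ∈ M', sgn (bf x.rep c.rep)) = 1 := by
    intro c hcOn hne0 hne0'
    have hcd : c0 ≠ c := fun hh => hne0 hh.symm
    obtain ⟨E, hEext, hEb0, hEbc, hEcont⟩ := pole_external h2 hc0On hcOn hcd
    have hEp : E ≠ p := by
      intro hh
      have hcmem : c ∈ contacts p := by
        rw [← hh, hEcont]
        exact Set.mem_insert_of_mem _ rfl
      rw [hcontp] at hcmem
      rcases hcmem with h | h
      · exact hne0 h
      · exact hne0' h
    have hET1 : Incid E T1 := by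
      rw [hT1eq]
      exact (incid_lineOf h2 E c0).mpr hEb0
    have hoddc := hM1 E hEext hEp hET1
    have hcast : ((M'.filter (fun x => Passant (lineThrough E x))).card : ZMod 2) = 1 := by
      rw [← ZMod.natCast_mod, Nat.odd_iff.mp hoddc, Nat.cast_one]
    rw [hfilter E, sum_passant h2 M' hMint hMeven hc0On hcOn hcd hEb0 hEbc] at hcast
    exact hcast
  obtain ⟨c1, c2, h12, hc1On, hc2On, hb1, hb2, hsetE⟩ := contacts_of_external h2 he
  have hRHS : (∑ x ∈ M',
        if ∃ l', Secant l' ∧ Incid x l' ∧ Incid e l' then (1 : ZMod 2) else 0)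
      = (∑ x ∈ M', sgn (bf x.rep c1.rep)) + ∑ x ∈ M', sgn (bf x.rep c2.rep) := by
    have hstep : ∀ x ∈ M',
        (if ∃ l', Secant l' ∧ Incid x l' ∧ Incid e l' then (1 : ZMod 2) else 0)
          = 1 + (if Passant (lineThrough e x) then (1 : ZMod 2) else 0) :=
      fun x hx => secant_ind h2 hc1On hc2On h12 hb1 hb2 (hMint x hx)
    rw [Finset.sum_congr rfl hstep, Finset.sum_add_distrib, Finset.sum_const,
      nsmul_zmod2 hMeven, zero_add,
      sum_passant h2 M' hMint hMeven hc1On hc2On h12 hb1 hb2]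
  rw [hRHS]
  have hmemiff : ∀ c : Pt K, OnConic c → (bf e.rep c.rep = 0 ↔ (c = c1 ∨ c = c2)) := by
    intro c hcOn
    constructor
    · intro hbf
      have hmem : c ∈ contacts e := ⟨hcOn, hbf⟩
      rw [hsetE] at hmem
      simpa using hmem
    · rintro (rfl | rfl)
      · exact hb1
      · exact hb2
  have hiT1 : Incid e T1 ↔ (c0 = c1 ∨ c0 = c2) := by
    rw [hT1eq, incid_lineOf h2]
    exact hmemiff c0 hc0On
  have hiT2 : Incid e T2 ↔ (c0' = c1 ∨ c0' = c2) := by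
    rw [hT2eq, incid_lineOf h2]
    exact hmemiff c0' hc0'On
  by_cases hA : c0 = c1 ∨ c0 = c2 <;> by_cases hB : c0' = c1 ∨ c0' = c2
  · rw [if_pos (hiT1.mpr hA), if_pos (hiT2.mpr hB)]
    rcases hA with hA1 | hA2 <;> rcases hB with hB1 | hB2
    · exact absurd (hA1.trans hB1.symm) hc00'
    · rw [← hA1, ← hB2, hR2]; decide
    · rw [← hA2, ← hB1]
      exact (by decide : ∀ a b : ZMod 2, a + b = 0 → (1 : ZMod 2) + 1 = b + a) _ _ hR2
    · exact absurd (hA2.trans hB2.symm) hc00'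
  · push_neg at hB
    rw [if_pos (hiT1.mpr hA), if_neg (fun hh => (hiT2.mp hh).elim hB.1 hB.2)]
    rcases hA with hA1 | hA2
    · have hx1 : c2 ≠ c0 := fun hh => h12 (hA1.symm.trans hh.symm)
      have hx2 : c2 ≠ c0' := fun hh => hB.2 hh.symm
      rw [← hA1, hR1 c2 hc2On hx1 hx2]
      decide
    · have hx1 : c1 ≠ c0 := fun hh => h12 (hh.trans hA2)
      have hx2 : c1 ≠ c0' := fun hh => hB.1 hh.symm
      rw [← hA2]
      exact (by decide : ∀ a b : ZMod 2, a + b = 1 → (1 : ZMod 2) + 0 = b + a) _ _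
        (hR1 c1 hc1On hx1 hx2)
  · push_neg at hA
    rw [if_neg (fun hh => (hiT1.mp hh).elim hA.1 hA.2), if_pos (hiT2.mpr hB)]
    rcases hB with hB1 | hB2
    · have hx1 : c2 ≠ c0 := fun hh => hA.2 hh.symm
      have hx2 : c2 ≠ c0' := fun hh => h12 (hB1.symm.trans hh.symm)
      rw [← hB1]
      exact (by decide : ∀ a b c : ZMod 2, a + b = 0 → a + c = 1 →
        (0 : ZMod 2) + 1 = b + c) _ _ _ hR2 (hR1 c2 hc2On hx1 hx2)
    · have hx1 : c1 ≠ c0 := fun hh => hA.1 hh.symm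
      have hx2 : c1 ≠ c0' := fun hh => h12 (hh.trans hB2)
      rw [← hB2]
      exact (by decide : ∀ a b c : ZMod 2, a + b = 0 → a + c = 1 →
        (0 : ZMod 2) + 1 = c + b) _ _ _ hR2 (hR1 c1 hc1On hx1 hx2)
  · push_neg at hA
    push_neg at hB
    rw [if_neg (fun hh => (hiT1.mp hh).elim hA.1 hA.2),
      if_neg (fun hh => (hiT2.mp hh).elim hB.1 hB.2)]
    have k1 := hR1 c1 hc1On (fun hh => hA.1 hh.symm) (fun hh => hB.1 hh.symm)
    have k2 := hR1 c2 hc2On (fun hh => hA.2 hh.symm) (fun hh => hB.2 hh.symm)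
    exact (by decide : ∀ a b c : ZMod 2, a + b = 1 → a + c = 1 →
      (0 : ZMod 2) + 0 = b + c) _ _ _ k1 k2

end ConicCode
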